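/- The initial vector is majorized by the intermediate vector of the recursive construction: C_l(ψ) ≥ C_l(φ^f) for every l ∈ {1,…,d}, i.e., ψ ≺ φ^f; moreover equality C_{l_j}(ψ) = C_{l_j}(φ^f) holds at each breakpoint l_j, j ∈ {1,…,k}. -/

import Mathlib

open Finset

/-- Tail-sum coherence monotone `C_l(p) = ∑_{i=l}^d p_i`, for a vector with (1-based)
entries `p 1, …, p d`.  Note `Cm d p (d+1) = 0` automatically. -/
noncomputable def Cm (d : ℕ) (p : ℕ → ℝ) (l : ℕ) : ℝ := ∑ i ∈ Finset.Icc l d, p i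

/-- `p` is a descending probability vector on the (1-based) index range `{1, …, d}`. -/
structure DescProb (d : ℕ) (p : ℕ → ℝ) : Prop where
  nonneg : ∀ i, 1 ≤ i → i ≤ d → 0 ≤ p i
  anti : ∀ i j, 1 ≤ i → i ≤ j → j ≤ d → p j ≤ p i
  sum_one : ∑ i ∈ Finset.Icc 1 d, p i = 1

/-- `p ≺ q` : `p` is majorized by `q` (both regarded as descending vectors on `{1, …, d}`). -/
def MajorizedBy (d : ℕ) (p q : ℕ → ℝ) : Prop :=
  (∀ k, 1 ≤ k → k ≤ d → ∑ i ∈ Finset.Icc 1 k, p i ≤ ∑ i ∈ Finset.Icc 1 k, q i) ∧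
    ∑ i ∈ Finset.Icc 1 d, p i = ∑ i ∈ Finset.Icc 1 d, q i

/-- The ratio `(C_l(ψ) - C_prev(ψ)) / (C_l(φ) - C_prev(φ))` appearing in the recursive
construction of the intermediate vector. -/
noncomputable def ratio (d : ℕ) (ψ φ : ℕ → ℝ) (prev l : ℕ) : ℝ :=
  (Cm d ψ l - Cm d ψ prev) / (Cm d φ l - Cm d φ prev)

/-- One step of the recursion: the minimal ratio over `l ∈ {1, …, prev - 1}`. -/
noncomputable def stepQ (d : ℕ) (ψ φ : ℕ → ℝ) (prev : ℕ) : ℝ :=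
  sInf {x : ℝ | ∃ l, 1 ≤ l ∧ l ≤ prev - 1 ∧ x = ratio d ψ φ prev l}

/-- One step of the recursion: the smallest `l ∈ {1, …, prev - 1}` attaining the minimal
ratio. -/
noncomputable def stepL (d : ℕ) (ψ φ : ℕ → ℝ) (prev : ℕ) : ℕ :=
  sInf {l : ℕ | 1 ≤ l ∧ l ≤ prev - 1 ∧ ratio d ψ φ prev l = stepQ d ψ φ prev}

/-- The sequence of indices `l_0 = d + 1 > l_1 > l_2 > ⋯` of the recursive construction. -/
noncomputable def Lseq (d : ℕ) (ψ φ : ℕ → ℝ) : ℕ → ℕ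
  | 0 => d + 1
  | j + 1 => stepL d ψ φ (Lseq d ψ φ j)

/-- The sequence of ratios `q_1 < q_2 < ⋯` of the recursive construction (`Qseq d ψ φ j`
is `q_j` for `j ≥ 1`; the value at `0` is irrelevant). -/
noncomputable def Qseq (d : ℕ) (ψ φ : ℕ → ℝ) : ℕ → ℝ
  | 0 => 1
  | j + 1 => stepQ d ψ φ (Lseq d ψ φ j)

/-- The terminating step `k` of the recursion: the first index `j` with `l_j = 1`. -/
noncomputable def kstop (d : ℕ) (ψ φ : ℕ → ℝ) : ℕ := sInf {j : ℕ | Lseq d ψ φ j = 1}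

/-- The intermediate vector `φ^f`, with `φ^f_i = q_j φ_i` for `i ∈ {l_j, …, l_{j-1} - 1}`
(for `i ∈ {1, …, d}`, the smallest `j` with `l_j ≤ i` is precisely the `j` with
`l_j ≤ i ≤ l_{j-1} - 1`). -/
noncomputable def phif (d : ℕ) (ψ φ : ℕ → ℝ) (i : ℕ) : ℝ :=
  Qseq d ψ φ (sInf {j : ℕ | Lseq d ψ φ j ≤ i}) * φ i

/-!
Induction along the breakpoints `d + 1 = l_0 > l_1 > ⋯ > l_k = 1`. On the block
`[l_{j+1}, l_j)` the vector `φ^f` is `q_{j+1} φ`, so for `l` in that block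
`C_l(φ^f) - C_{l_j}(φ^f) = q_{j+1} (C_l(φ) - C_{l_j}(φ))`. Minimality of `q_{j+1}` makes this at
most `C_l(ψ) - C_{l_j}(ψ)`, with equality at `l = l_{j+1}` since that index attains the minimum.
So the tail sums of `φ^f` agree with those of `ψ` at every breakpoint and are dominated in
between; at `l_k = 1` the totals agree, which turns domination of tail sums into majorization.
-/

section TailSums

variable {d : ℕ}

lemma Cm_sub_Cm (p : ℕ → ℝ) {l m : ℕ} (hlm : l ≤ m) (hm : m ≤ d + 1) :
    Cm d p l - Cm d p m = ∑ i ∈ Ico l m, p i := by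
  simp only [Cm, ← Ico_add_one_right_eq_Icc]
  rw [← sum_Ico_consecutive _ hlm hm]
  ring

lemma Cm_sub_Cm_pos {p : ℕ → ℝ} (hp : ∀ i, 1 ≤ i → i ≤ d → 0 < p i) {l m : ℕ}
    (hl : 1 ≤ l) (hlm : l < m) (hm : m ≤ d + 1) : 0 < Cm d p l - Cm d p m := by
  rw [Cm_sub_Cm p hlm.le hm]
  exact sum_pos (fun i hi => hp i (hl.trans (mem_Ico.1 hi).1) (by grind))
    (nonempty_Ico.2 hlm)

lemma Cm_eq_zero_of_lt (p : ℕ → ℝ) {m : ℕ} (hm : d < m) : Cm d p m = 0 := by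
  rw [Cm, Icc_eq_empty (by omega), sum_empty]

lemma sum_Icc_one_eq_Cm_sub (p : ℕ → ℝ) {k : ℕ} (hk : k ≤ d) :
    ∑ i ∈ Icc 1 k, p i = Cm d p 1 - Cm d p (k + 1) := by
  rw [Cm_sub_Cm p (by omega) (by omega), Ico_add_one_right_eq_Icc]

lemma majorizedBy_of_Cm_le {p q : ℕ → ℝ} (h1 : Cm d q 1 = Cm d p 1)
    (hle : ∀ l, 1 ≤ l → l ≤ d → Cm d q l ≤ Cm d p l) : MajorizedBy d p q := by
  refine ⟨fun k _ hkd => ?_, by simpa only [Cm] using h1.symm⟩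
  rw [sum_Icc_one_eq_Cm_sub p hkd, sum_Icc_one_eq_Cm_sub q hkd]
  rcases hkd.lt_or_eq with hk | hk
  · linarith [hle (k + 1) (by omega) hk]
  · rw [hk, Cm_eq_zero_of_lt p (Nat.lt_succ_self d), Cm_eq_zero_of_lt q (Nat.lt_succ_self d)]
    linarith

end TailSums

section Step

variable {d : ℕ} {ψ φ : ℕ → ℝ} {prev : ℕ}

lemma finite_ratios (d : ℕ) (ψ φ : ℕ → ℝ) (prev : ℕ) :
    {x : ℝ | ∃ l, 1 ≤ l ∧ l ≤ prev - 1 ∧ x = ratio d ψ φ prev l}.Finite :=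
  ((Set.finite_Icc 1 (prev - 1)).image (ratio d ψ φ prev)).subset
    (by rintro x ⟨l, hl, hlp, rfl⟩; exact ⟨l, ⟨hl, hlp⟩, rfl⟩)

lemma stepQ_le_ratio {l : ℕ} (hl : 1 ≤ l) (hlp : l ≤ prev - 1) :
    stepQ d ψ φ prev ≤ ratio d ψ φ prev l :=
  csInf_le (finite_ratios d ψ φ prev).bddBelow ⟨l, hl, hlp, rfl⟩

lemma stepL_spec (hprev : 2 ≤ prev) :
    1 ≤ stepL d ψ φ prev ∧ stepL d ψ φ prev ≤ prev - 1 ∧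
      ratio d ψ φ prev (stepL d ψ φ prev) = stepQ d ψ φ prev := by
  obtain ⟨l, hl, hlp, hq⟩ :=
    Set.Nonempty.csInf_mem (by exact ⟨_, 1, le_rfl, by omega, rfl⟩) (finite_ratios d ψ φ prev)
  exact Nat.sInf_mem (s := {l | 1 ≤ l ∧ l ≤ prev - 1 ∧ ratio d ψ φ prev l = stepQ d ψ φ prev})
    ⟨l, hl, hlp, hq.symm⟩

lemma stepQ_mul_le (hφ : ∀ i, 1 ≤ i → i ≤ d → 0 < φ i) (hprev : prev ≤ d + 1) {l : ℕ}
    (hl : 1 ≤ l) (hlp : l < prev) :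
    stepQ d ψ φ prev * (Cm d φ l - Cm d φ prev) ≤ Cm d ψ l - Cm d ψ prev := by
  have h := stepQ_le_ratio (d := d) (ψ := ψ) (φ := φ) hl (show l ≤ prev - 1 by omega)
  rwa [ratio, le_div_iff₀ (Cm_sub_Cm_pos hφ hl hlp hprev)] at h

lemma stepQ_mul_eq (hφ : ∀ i, 1 ≤ i → i ≤ d → 0 < φ i) (h2 : 2 ≤ prev) (hprev : prev ≤ d + 1) :
    stepQ d ψ φ prev * (Cm d φ (stepL d ψ φ prev) - Cm d φ prev) =
      Cm d ψ (stepL d ψ φ prev) - Cm d ψ prev := by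
  obtain ⟨hl, hlp, hq⟩ := stepL_spec (d := d) (ψ := ψ) (φ := φ) h2
  rw [← hq, ratio, div_mul_cancel₀ _ (Cm_sub_Cm_pos hφ hl (by omega) hprev).ne']

end Step

section Breakpoints

variable {d : ℕ} {ψ φ : ℕ → ℝ} {j : ℕ}

lemma Lseq_succ_lt (h : 2 ≤ Lseq d ψ φ j) :
    1 ≤ Lseq d ψ φ (j + 1) ∧ Lseq d ψ φ (j + 1) < Lseq d ψ φ j := by
  obtain ⟨hl, hlp, -⟩ := stepL_spec (d := d) (ψ := ψ) (φ := φ) h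
  exact ⟨hl, by simp only [Lseq]; omega⟩

lemma exists_Lseq_eq_one (d : ℕ) (ψ φ : ℕ → ℝ) : ∃ j, Lseq d ψ φ j = 1 := by
  by_contra! hne
  have hbound : ∀ j, 1 ≤ Lseq d ψ φ j ∧ Lseq d ψ φ j + j ≤ d + 1 := by
    intro j
    induction j with
    | zero => simp [Lseq]
    | succ j ih =>
      have := Lseq_succ_lt (show 2 ≤ Lseq d ψ φ j by have := hne j; omega)
      omega
  have := hbound (d + 1)
  omega

lemma Lseq_kstop (d : ℕ) (ψ φ : ℕ → ℝ) : Lseq d ψ φ (kstop d ψ φ) = 1 :=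
  Nat.sInf_mem (exists_Lseq_eq_one d ψ φ)

lemma Lseq_ne_one (hj : j < kstop d ψ φ) : Lseq d ψ φ j ≠ 1 :=
  Nat.notMem_of_lt_sInf (s := {j | Lseq d ψ φ j = 1}) hj

lemma two_le_Lseq (hj : j < kstop d ψ φ) : 2 ≤ Lseq d ψ φ j := by
  have hne := Lseq_ne_one hj
  induction j with
  | zero => simp only [Lseq] at hne ⊢; omega
  | succ j ih =>
    have := Lseq_succ_lt (ih (by omega) (Lseq_ne_one (by omega)))
    omega

lemma Lseq_le_Lseq {i : ℕ} (hij : i ≤ j) (hj : j ≤ kstop d ψ φ) :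
    Lseq d ψ φ j ≤ Lseq d ψ φ i := by
  induction j, hij using Nat.le_induction with
  | base => exact le_rfl
  | succ j _ ih => exact (Lseq_succ_lt (two_le_Lseq hj)).2.le.trans (ih (by omega))

lemma Lseq_le (hj : j ≤ kstop d ψ φ) : Lseq d ψ φ j ≤ d + 1 :=
  Lseq_le_Lseq (Nat.zero_le j) hj

end Breakpoints

section IntermediateVector

variable {d : ℕ} {ψ φ : ℕ → ℝ} {j : ℕ}

lemma phif_eq_stepQ_mul {i : ℕ} (hj : j < kstop d ψ φ) (hi : Lseq d ψ φ (j + 1) ≤ i)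
    (hi' : i < Lseq d ψ φ j) : phif d ψ φ i = stepQ d ψ φ (Lseq d ψ φ j) * φ i := by
  set S := {j' | Lseq d ψ φ j' ≤ i}
  have hblock : sInf S = j + 1 := by
    refine (Nat.sInf_le (s := S) hi).antisymm ?_
    by_contra! hlt
    have hmem : Lseq d ψ φ (sInf S) ≤ i := Nat.sInf_mem (s := S) ⟨j + 1, hi⟩
    exact (hi'.trans_le (Lseq_le_Lseq (Nat.le_of_lt_succ hlt) hj.le)).not_ge hmem
  rw [phif, hblock]
  rfl

lemma Cm_phif_of_mem_block (hj : j < kstop d ψ φ) {l : ℕ} (hl : Lseq d ψ φ (j + 1) ≤ l)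
    (hl' : l ≤ Lseq d ψ φ j) :
    Cm d (phif d ψ φ) l = Cm d (phif d ψ φ) (Lseq d ψ φ j) +
      stepQ d ψ φ (Lseq d ψ φ j) * (Cm d φ l - Cm d φ (Lseq d ψ φ j)) := by
  have hsum : ∑ i ∈ Ico l (Lseq d ψ φ j), phif d ψ φ i =
      stepQ d ψ φ (Lseq d ψ φ j) * (Cm d φ l - Cm d φ (Lseq d ψ φ j)) := by
    rw [Cm_sub_Cm φ hl' (Lseq_le hj.le), mul_sum]
    refine sum_congr rfl fun i hi => ?_
    rw [mem_Ico] at hi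
    exact phif_eq_stepQ_mul hj (hl.trans hi.1) hi.2
  linarith [Cm_sub_Cm (phif d ψ φ) hl' (Lseq_le hj.le)]

lemma Cm_phif_Lseq_eq_and_le (hφ : ∀ i, 1 ≤ i → i ≤ d → 0 < φ i) (hj : j ≤ kstop d ψ φ) :
    Cm d (phif d ψ φ) (Lseq d ψ φ j) = Cm d ψ (Lseq d ψ φ j) ∧
      ∀ l, Lseq d ψ φ j ≤ l → l ≤ d → Cm d (phif d ψ φ) l ≤ Cm d ψ l := by
  induction j with
  | zero =>
    constructor
    · simp only [Lseq, Cm_eq_zero_of_lt _ (Nat.lt_succ_self d)]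
    · intro l hl hld
      simp only [Lseq] at hl
      omega
  | succ j ih =>
    have hjk : j < kstop d ψ φ := by omega
    obtain ⟨heq, hle⟩ := ih hjk.le
    have h2 := two_le_Lseq hjk
    have hprev := Lseq_le hjk.le
    obtain ⟨hone, hlt⟩ := Lseq_succ_lt h2
    refine ⟨?_, fun l hl hld => ?_⟩
    · rw [Cm_phif_of_mem_block hjk le_rfl hlt.le, heq]
      have := stepQ_mul_eq (ψ := ψ) hφ h2 hprev
      simp only [Lseq] at this ⊢
      linarith
    · rcases le_or_gt (Lseq d ψ φ j) l with hjl | hlj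
      · exact hle l hjl hld
      · rw [Cm_phif_of_mem_block hjk hl hlj.le, heq]
        linarith [stepQ_mul_le (ψ := ψ) hφ hprev (hone.trans hl) hlj]

end IntermediateVector

theorem initial_majorized_by_phif_general (d : ℕ) (ψ φ : ℕ → ℝ)
    (hφpos : ∀ i, 1 ≤ i → i ≤ d → 0 < φ i) :
    (∀ l, 1 ≤ l → l ≤ d → Cm d (phif d ψ φ) l ≤ Cm d ψ l) ∧
      MajorizedBy d ψ (phif d ψ φ) ∧
      (∀ j, 1 ≤ j → j ≤ kstop d ψ φ →
        Cm d ψ (Lseq d ψ φ j) = Cm d (phif d ψ φ) (Lseq d ψ φ j)) := by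
  obtain ⟨htotal, hle⟩ := Cm_phif_Lseq_eq_and_le (ψ := ψ) hφpos le_rfl
  rw [Lseq_kstop] at htotal hle
  exact ⟨hle, majorizedBy_of_Cm_le htotal hle,
    fun j _ hj => (Cm_phif_Lseq_eq_and_le hφpos hj).1.symm⟩

/-- The initial vector is majorized by the intermediate vector:
`C_l(ψ) ≥ C_l(φ^f)` for all `l ∈ {1, …, d}`, i.e. `ψ ≺ φ^f`; moreover equality
`C_{l_j}(ψ) = C_{l_j}(φ^f)` holds at each breakpoint `l_j`, `j ∈ {1, …, k}`. -/
theorem initial_majorized_by_phif (d : ℕ) (hd : 1 ≤ d) (ψ φ : ℕ → ℝ)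
    (hψ : DescProb d ψ) (hφ : DescProb d φ)
    (hψpos : ∀ i, 1 ≤ i → i ≤ d → 0 < ψ i) (hφpos : ∀ i, 1 ≤ i → i ≤ d → 0 < φ i) :
    (∀ l, 1 ≤ l → l ≤ d → Cm d (phif d ψ φ) l ≤ Cm d ψ l) ∧
      MajorizedBy d ψ (phif d ψ φ) ∧
      (∀ j, 1 ≤ j → j ≤ kstop d ψ φ →
        Cm d ψ (Lseq d ψ φ j) = Cm d (phif d ψ φ) (Lseq d ψ φ j)) :=
  initial_majorized_by_phif_general d ψ φ hφpos
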